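/- Proposition (Prop. 2, positive zeros from a singular Jacobian-type matrix): Let A' ∈ ℝ^{s×r'}, V' ∈ ℝ^{n×r'}, S ⊆ ℝⁿ a subspace of dimension s, and Z a matrix whose rows form a basis of S^⊥. Suppose η ∈ ℝ^{r'}_{>0} satisfies A'η ∈ ℝˢ_{>0} and det(M_{η,λ}) = 0 for some λ ∈ ℝⁿ_{>0}, where M_{κ,λ} = (Z; A' diag(κ) V'ᵗ diag(λ)). Then there exist distinct x, y ∈ ℝⁿ_{>0} with x - y ∈ S and κ ∈ ℝ^{r'}_{>0} such that A'(κ ∘ x^{V'}) = A'(κ ∘ y^{V'}) and this common value lies in ℝˢ_{>0}. -/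

import Mathlib

/-!
A kernel vector `v` of `M_{η,λ}` lies in `S` and satisfies `A' (η ∘ c) = 0` with
`c = V'ᵗ (λ ∘ v)`. For `ε ≠ 0` put `t = ε (λ ∘ v)`, `y = φ(t) / λ` and `x = eᵗ y`, where
`φ(t) = t / (eᵗ - 1)` (`divExpSubOne`). Then `x - y = t / λ = ε v ∈ S` and
`x^{V'} = e^{ε c} y^{V'}`, so with `κ = η φ(ε c) / y^{V'}` we get
`κ ∘ x^{V'} - κ ∘ y^{V'} = ε (η ∘ c)`, which `A'` kills, while
`A' (κ ∘ y^{V'}) = A' (η φ(ε c))` tends to `A' η > 0` as `ε → 0`.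
-/

open Filter Topology Matrix

/-- The vector of generalised monomials `x^V` given by the columns of `V`. -/
noncomputable def monos {n r : ℕ} (V : Matrix (Fin n) (Fin r) ℝ) (x : Fin n → ℝ) :
    Fin r → ℝ :=
  fun j => ∏ i, x i ^ V i j

/-- The matrix `M_{κ,λ}` obtained by stacking `Z` on top of `A' diag(κ) V'ᵗ diag(λ)`. -/
noncomputable def Mmat {n s r' : ℕ} (hsn : s ≤ n)
    (Z : Matrix (Fin (n - s)) (Fin n) ℝ) (A' : Matrix (Fin s) (Fin r') ℝ)
    (V' : Matrix (Fin n) (Fin r') ℝ) (κ : Fin r' → ℝ) (l : Fin n → ℝ) :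
    Matrix (Fin n) (Fin n) ℝ :=
  (Matrix.fromRows Z (A' * Matrix.diagonal κ * V'.transpose * Matrix.diagonal l)).submatrix
    (fun i : Fin n => finSumFinEquiv.symm (finCongr (Nat.sub_add_cancel hsn).symm i)) id

noncomputable def divExpSubOne (t : ℝ) : ℝ := if t = 0 then 1 else t / (Real.exp t - 1)

lemma divExpSubOne_pos (t : ℝ) : 0 < divExpSubOne t := by
  unfold divExpSubOne
  split_ifs with h
  · exact one_pos
  · rcases lt_or_gt_of_ne h with ht | ht
    · exact div_pos_of_neg_of_neg ht (by linarith [Real.exp_lt_one_iff.2 ht])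
    · exact div_pos ht (by linarith [Real.one_lt_exp_iff.2 ht])

lemma divExpSubOne_mul_exp_sub_one (t : ℝ) : divExpSubOne t * (Real.exp t - 1) = t := by
  unfold divExpSubOne
  split_ifs with h
  · simp [h]
  · exact div_mul_cancel₀ _ fun h' => h (Real.exp_eq_one_iff t |>.1 (sub_eq_zero.1 h'))

lemma continuousAt_divExpSubOne_zero : ContinuousAt divExpSubOne 0 := by
  have hslope : Tendsto (slope Real.exp 0) (𝓝[≠] 0) (𝓝 1) := by
    simpa using hasDerivAt_iff_tendsto_slope.1 (Real.hasDerivAt_exp 0)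
  rw [continuousAt_iff_punctured_nhds, show divExpSubOne 0 = 1⁻¹ by simp [divExpSubOne]]
  refine (hslope.inv₀ one_ne_zero).congr' ?_
  filter_upwards [self_mem_nhdsWithin] with t (ht : t ≠ 0)
  simp [slope_def_field, divExpSubOne, ht]

lemma monos_pos {n r : ℕ} (V : Matrix (Fin n) (Fin r) ℝ) {x : Fin n → ℝ}
    (hx : ∀ i, 0 < x i) (j : Fin r) : 0 < monos V x j :=
  Finset.prod_pos fun i _ => Real.rpow_pos_of_pos (hx i) _

lemma monos_exp_mul {n r : ℕ} (V : Matrix (Fin n) (Fin r) ℝ) (t : Fin n → ℝ) {y : Fin n → ℝ}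
    (hy : ∀ i, 0 < y i) :
    monos V (fun i => Real.exp (t i) * y i) = fun j => Real.exp ((Vᵀ *ᵥ t) j) * monos V y j := by
  ext j
  simp only [monos, mulVec, dotProduct, transpose_apply, Real.exp_sum, ← Finset.prod_mul_distrib]
  refine Finset.prod_congr rfl fun i _ => ?_
  rw [Real.mul_rpow (Real.exp_pos _).le (hy i).le, ← Real.exp_mul, mul_comm (t i)]

lemma diagonal_mulVec_eq_mul {ι α : Type*} [Fintype ι] [DecidableEq ι]
    [NonUnitalNonAssocSemiring α] (d w : ι → α) :
    diagonal d *ᵥ w = d * w :=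
  funext (mulVec_diagonal d w)

lemma Mmat_mulVec_eq_zero_iff {n s r' : ℕ} (hsn : s ≤ n)
    (Z : Matrix (Fin (n - s)) (Fin n) ℝ) (A' : Matrix (Fin s) (Fin r') ℝ)
    (V' : Matrix (Fin n) (Fin r') ℝ) (κ : Fin r' → ℝ) (l v : Fin n → ℝ) :
    Mmat hsn Z A' V' κ l *ᵥ v = 0 ↔
      Z *ᵥ v = 0 ∧ A' *ᵥ (κ * (V'ᵀ *ᵥ (l * v))) = 0 := by
  let e : Fin n ≃ Fin (n - s) ⊕ Fin s :=
    (finCongr (Nat.sub_add_cancel hsn).symm).trans finSumFinEquiv.symm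
  have hM : Mmat hsn Z A' V' κ l *ᵥ v =
      Sum.elim (Z *ᵥ v) (A' *ᵥ (κ * (V'ᵀ *ᵥ (l * v)))) ∘ e := by
    rw [Mmat, ← Equiv.coe_refl, submatrix_mulVec_equiv]
    simp only [Equiv.refl_symm, Equiv.coe_refl, Function.comp_id, fromRows_mulVec,
      ← mulVec_mulVec, diagonal_mulVec_eq_mul]
    rfl
  rw [hM, ← Sum.elim_eq_iff, Sum.elim_zero_zero]
  exact ⟨fun h => e.surjective.injective_comp_right h, fun h => by rw [h]; rfl⟩

lemma eventually_pos_mulVec_mul_divExpSubOne {m r : Type*} [Finite m] [Fintype r]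
    (A : Matrix m r ℝ) {η : r → ℝ} (hAη : ∀ i, 0 < (A *ᵥ η) i) (c : r → ℝ) :
    ∀ᶠ ε in 𝓝 (0 : ℝ), ∀ i, 0 < (A *ᵥ (η * fun j => divExpSubOne (ε * c j))) i := by
  have hcont : ContinuousAt (fun ε : ℝ => A *ᵥ (η * fun j => divExpSubOne (ε * c j))) 0 :=
    (continuous_const.matrix_mulVec continuous_id).continuousAt.comp <|
      continuousAt_const.mul <| continuousAt_pi.2 fun j =>
        continuousAt_divExpSubOne_zero.comp_of_eq (continuousAt_id.mul continuousAt_const)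
          (zero_mul _)
  have h0 : (A *ᵥ (η * fun j => divExpSubOne (0 * c j))) = A *ᵥ η := by
    simp [divExpSubOne, ← Pi.one_def]
  rw [ContinuousAt, h0, tendsto_pi_nhds] at hcont
  exact eventually_all.2 fun i => (hcont i).eventually_const_lt (hAη i)

lemma exists_pos_sub_eq_smul_mul_monos {n r : ℕ} (V : Matrix (Fin n) (Fin r) ℝ)
    {η : Fin r → ℝ} (hη : ∀ j, 0 < η j) {l : Fin n → ℝ} (hl : ∀ i, 0 < l i)
    (v : Fin n → ℝ) (ε : ℝ) :
    ∃ x y : Fin n → ℝ, ∃ κ : Fin r → ℝ,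
      (∀ i, 0 < x i) ∧ (∀ i, 0 < y i) ∧ (∀ j, 0 < κ j) ∧ x - y = ε • v ∧
      κ * monos V y = (η * fun j => divExpSubOne (ε * (Vᵀ *ᵥ (l * v)) j)) ∧
      κ * monos V x = κ * monos V y + ε • (η * (Vᵀ *ᵥ (l * v))) := by
  set c := Vᵀ *ᵥ (l * v)
  set t := ε • (l * v)
  set y : Fin n → ℝ := fun i => divExpSubOne (t i) / l i
  have hy : ∀ i, 0 < y i := fun i => div_pos (divExpSubOne_pos _) (hl i)
  set κ : Fin r → ℝ := fun j => η j * divExpSubOne (ε * c j) / monos V y j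
  have hκy : κ * monos V y = η * fun j => divExpSubOne (ε * c j) :=
    funext fun j => div_mul_cancel₀ _ (monos_pos V hy j).ne'
  refine ⟨fun i => Real.exp (t i) * y i, y, κ, fun i => mul_pos (Real.exp_pos _) (hy i), hy,
    fun j => div_pos (mul_pos (hη j) (divExpSubOne_pos _)) (monos_pos V hy j), ?_, hκy, ?_⟩
  · funext i
    calc Real.exp (t i) * y i - y i = divExpSubOne (t i) * (Real.exp (t i) - 1) / l i := by ring
      _ = ε * v i := by
        rw [divExpSubOne_mul_exp_sub_one]
        simp only [t, Pi.smul_apply, Pi.mul_apply, smul_eq_mul]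
        field_simp [(hl i).ne']
  · have hVt : Vᵀ *ᵥ t = ε • c := mulVec_smul _ _ _
    funext j
    have hκyj := congrFun hκy j
    simp only [Pi.mul_apply] at hκyj
    simp only [monos_exp_mul V t hy, hVt, Pi.mul_apply, Pi.add_apply, Pi.smul_apply, smul_eq_mul]
    linear_combination
      (Real.exp (ε * c j) - 1) * hκyj + η j * divExpSubOne_mul_exp_sub_one (ε * c j)

theorem stmt_11_general {n s r' : ℕ} (hsn : s ≤ n)
    (A' : Matrix (Fin s) (Fin r') ℝ) (V' : Matrix (Fin n) (Fin r') ℝ)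
    (S : Submodule ℝ (Fin n → ℝ))
    (Z : Matrix (Fin (n - s)) (Fin n) ℝ)
    (hZ : ∀ x : Fin n → ℝ, Z.mulVec x = 0 ↔ x ∈ S)
    (η : Fin r' → ℝ) (hη : ∀ j, 0 < η j)
    (hAη : ∀ i, 0 < A'.mulVec η i)
    (l : Fin n → ℝ) (hl : ∀ i, 0 < l i)
    (hdet : (Mmat hsn Z A' V' η l).det = 0) :
    ∃ x y : Fin n → ℝ, ∃ κ : Fin r' → ℝ,
      (∀ i, 0 < x i) ∧ (∀ i, 0 < y i) ∧ x ≠ y ∧ x - y ∈ S ∧ (∀ j, 0 < κ j) ∧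
      A'.mulVec (fun j => κ j * monos V' x j) =
        A'.mulVec (fun j => κ j * monos V' y j) ∧
      (∀ i, 0 < A'.mulVec (fun j => κ j * monos V' x j) i) := by
  obtain ⟨v, hv0, hv⟩ := exists_mulVec_eq_zero_iff.2 hdet
  obtain ⟨hZv, hker⟩ := (Mmat_mulVec_eq_zero_iff hsn Z A' V' η l v).1 hv
  obtain ⟨ε, hεpos, hε0 : ε ≠ 0⟩ :=
    ((eventually_pos_mulVec_mul_divExpSubOne A' hAη (V'ᵀ *ᵥ (l * v))).filter_mono
      nhdsWithin_le_nhds |>.and (self_mem_nhdsWithin (s := {0}ᶜ))).exists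
  obtain ⟨x, y, κ, hx, hy, hκ, hxy, hκy, hκx⟩ := exists_pos_sub_eq_smul_mul_monos V' hη hl v ε
  have hA : A' *ᵥ (κ * monos V' x) = A' *ᵥ (κ * monos V' y) := by
    rw [hκx, mulVec_add, mulVec_smul, hker, smul_zero, add_zero]
  refine ⟨x, y, κ, hx, hy, fun h => ?_, hxy ▸ S.smul_mem ε ((hZ v).1 hZv), hκ, hA, ?_⟩
  · rw [h, sub_self] at hxy
    exact smul_ne_zero hε0 hv0 hxy.symm
  · exact fun i => hA ▸ hκy ▸ hεpos i

theorem stmt_11 {n s r' : ℕ} (hsn : s ≤ n)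
    (A' : Matrix (Fin s) (Fin r') ℝ) (V' : Matrix (Fin n) (Fin r') ℝ)
    (S : Submodule ℝ (Fin n → ℝ)) (hS : Module.finrank ℝ S = s)
    (Z : Matrix (Fin (n - s)) (Fin n) ℝ)
    (hZ : ∀ x : Fin n → ℝ, Z.mulVec x = 0 ↔ x ∈ S)
    (η : Fin r' → ℝ) (hη : ∀ j, 0 < η j)
    (hAη : ∀ i, 0 < A'.mulVec η i)
    (l : Fin n → ℝ) (hl : ∀ i, 0 < l i)
    (hdet : (Mmat hsn Z A' V' η l).det = 0) :
    ∃ x y : Fin n → ℝ, ∃ κ : Fin r' → ℝ,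
      (∀ i, 0 < x i) ∧ (∀ i, 0 < y i) ∧ x ≠ y ∧ x - y ∈ S ∧ (∀ j, 0 < κ j) ∧
      A'.mulVec (fun j => κ j * monos V' x j) =
        A'.mulVec (fun j => κ j * monos V' y j) ∧
      (∀ i, 0 < A'.mulVec (fun j => κ j * monos V' x j) i) :=
  stmt_11_general hsn A' V' S Z hZ η hη hAη l hl hdet
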